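/- Let h' ∈ ℝ^N, ρ > 0, and c₁, ..., c_N ∈ ℝ. Define, for μ ∈ ℝ, wₙ(μ) = −1 − cₙ + ρ(h'ₙ − μ), and let μ̂ be the unique zero of κ(μ) = ρ⁻¹∑ₙ W(ρ·exp(wₙ(μ))) − 1. Then ĥ with ĥₙ = ρ⁻¹·W(ρ·exp(wₙ(μ̂))) is the unique minimizer over the simplex Δ_N of h ↦ ρ⁻¹∑ₙ(hₙ ln hₙ + cₙhₙ) + (1/2)‖h − h'‖². -/
import Mathlib


open Finset

/-- Convexity inequality for the entropy: for `s > 0`, `t ≥ 0`,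
`t log t ≥ s log s + (log s + 1)(t - s)`. -/
lemma entropy_tangent (s t : ℝ) (hs : 0 < s) (ht : 0 ≤ t) :
    0 ≤ t * Real.log t - s * Real.log s - (Real.log s + 1) * (t - s) := by
  rcases ht.lt_or_eq with h | h
  · have hlog := Real.log_le_sub_one_of_pos (show 0 < s / t by positivity)
    rw [Real.log_div hs.ne' h.ne'] at hlog
    have h2 : t * (Real.log s - Real.log t) ≤ t * (s / t - 1) :=
      mul_le_mul_of_nonneg_left hlog h.le
    have h3 : t * (s / t) = s := by field_simp
    nlinarith [h2, h3]
  · rw [← h]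
    simp
    nlinarith [hs]

/-- with `μ̂` the zero of the dual function `κ`, the vector
`ĥₙ = ρ⁻¹ W(ρ exp(wₙ(μ̂)))`, where `wₙ(μ) = −1 − cₙ + ρ(h'ₙ − μ)`, is the unique
minimizer over the simplex `Δ_N` of
`h ↦ ρ⁻¹ ∑ₙ (hₙ ln hₙ + cₙ hₙ) + (1/2)‖h − h'‖²`. -/
theorem stmt8 (N : ℕ) (hN : 1 ≤ N) (ρ : ℝ) (hρ : 0 < ρ)
    (h' c : Fin N → ℝ)
    (W : ℝ → ℝ)
    (hW_nonneg : ∀ z, 0 ≤ z → 0 ≤ W z)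
    (hW_inv : ∀ z, 0 ≤ z → W z * Real.exp (W z) = z)
    (w : ℝ → Fin N → ℝ)
    (hw : ∀ μ n, w μ n = -1 - c n + ρ * (h' n - μ))
    (κ : ℝ → ℝ)
    (hκ : ∀ μ, κ μ = ρ⁻¹ * ∑ n, W (ρ * Real.exp (w μ n)) - 1)
    (μhat : ℝ) (hμhat : κ μhat = 0)
    (Δ : Set (Fin N → ℝ))
    (hΔ : Δ = {h : Fin N → ℝ | (∀ n, 0 ≤ h n) ∧ ∑ n, h n = 1})
    (f : (Fin N → ℝ) → ℝ)
    (hf : ∀ h : Fin N → ℝ, f h =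
      ρ⁻¹ * ∑ n, (h n * Real.log (h n) + c n * h n)
        + 1 / 2 * ∑ n, (h n - h' n) ^ 2)
    (hhat : Fin N → ℝ)
    (hhhat : ∀ n, hhat n = ρ⁻¹ * W (ρ * Real.exp (w μhat n))) :
    hhat ∈ Δ ∧ (∀ h ∈ Δ, f hhat ≤ f h) ∧
      (∀ h ∈ Δ, f h = f hhat → h = hhat) := by
  -- positivity of W values
  have hz : ∀ n : Fin N, 0 < ρ * Real.exp (w μhat n) := fun n => by positivity
  have hy_pos : ∀ n : Fin N, 0 < W (ρ * Real.exp (w μhat n)) := by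
    intro n
    rcases (hW_nonneg _ (hz n).le).lt_or_eq with h | h
    · exact h
    · exfalso
      have h2 := hW_inv _ (hz n).le
      rw [← h, zero_mul] at h2
      exact (hz n).ne h2
  have hs_pos : ∀ n, 0 < hhat n := by
    intro n
    rw [hhhat n]
    have := hy_pos n
    positivity
  -- logarithm of hhat n
  have hlog : ∀ n, Real.log (hhat n) = w μhat n - ρ * hhat n := by
    intro n
    set y := W (ρ * Real.exp (w μhat n)) with hy
    have h2 := hW_inv _ (hz n).le
    have h3 := congrArg Real.log h2
    rw [Real.log_mul (hy_pos n).ne' (Real.exp_ne_zero _), Real.log_exp,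
        Real.log_mul hρ.ne' (Real.exp_ne_zero _), Real.log_exp] at h3
    have hhn : hhat n = ρ⁻¹ * y := hhhat n
    rw [hhn, Real.log_mul (by positivity) (hy_pos n).ne', Real.log_inv]
    have : ρ * (ρ⁻¹ * y) = y := by field_simp
    rw [this]
    linarith [h3]
  -- hhat sums to 1
  have hsum_hat : ∑ n, hhat n = 1 := by
    have h1 := hμhat
    rw [hκ] at h1
    calc ∑ n, hhat n = ∑ n, ρ⁻¹ * W (ρ * Real.exp (w μhat n)) :=
          Finset.sum_congr rfl fun n _ => hhhat n
      _ = ρ⁻¹ * ∑ n, W (ρ * Real.exp (w μhat n)) := (Finset.mul_sum _ _ _).symm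
      _ = 1 := by linarith
  -- key decomposition
  have main : ∀ h : Fin N → ℝ, (∀ n, 0 ≤ h n) → ∑ n, h n = 1 →
      f h - f hhat = ∑ n, (ρ⁻¹ * (h n * Real.log (h n) - hhat n * Real.log (hhat n)
        - (Real.log (hhat n) + 1) * (h n - hhat n)) + 1 / 2 * (h n - hhat n) ^ 2) := by
    intro h hpos hsum
    have e1 : ∀ n, (ρ⁻¹ * (h n * Real.log (h n) + c n * h n)
          + 1 / 2 * (h n - h' n) ^ 2)
        - (ρ⁻¹ * (hhat n * Real.log (hhat n) + c n * hhat n)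
          + 1 / 2 * (hhat n - h' n) ^ 2)
        = (ρ⁻¹ * (h n * Real.log (h n) - hhat n * Real.log (hhat n)
          - (Real.log (hhat n) + 1) * (h n - hhat n)) + 1 / 2 * (h n - hhat n) ^ 2)
          - μhat * (h n - hhat n) := by
      intro n
      rw [hlog n, hw]
      field_simp
      ring
    calc f h - f hhat
        = ∑ n, ((ρ⁻¹ * (h n * Real.log (h n) + c n * h n)
            + 1 / 2 * (h n - h' n) ^ 2)
          - (ρ⁻¹ * (hhat n * Real.log (hhat n) + c n * hhat n)
            + 1 / 2 * (hhat n - h' n) ^ 2)) := by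
          rw [hf, hf, Finset.mul_sum, Finset.mul_sum, Finset.mul_sum, Finset.mul_sum,
            Finset.sum_sub_distrib, Finset.sum_add_distrib, Finset.sum_add_distrib]
      _ = ∑ n, ((ρ⁻¹ * (h n * Real.log (h n) - hhat n * Real.log (hhat n)
            - (Real.log (hhat n) + 1) * (h n - hhat n)) + 1 / 2 * (h n - hhat n) ^ 2)
            - μhat * (h n - hhat n)) := Finset.sum_congr rfl fun n _ => e1 n
      _ = ∑ n, (ρ⁻¹ * (h n * Real.log (h n) - hhat n * Real.log (hhat n)
            - (Real.log (hhat n) + 1) * (h n - hhat n)) + 1 / 2 * (h n - hhat n) ^ 2)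
            - μhat * (∑ n, h n - ∑ n, hhat n) := by
          rw [Finset.sum_sub_distrib, ← Finset.mul_sum, Finset.sum_sub_distrib]
      _ = _ := by rw [hsum, hsum_hat]; ring
  have term_nonneg : ∀ (h : Fin N → ℝ), (∀ n, 0 ≤ h n) → ∀ n : Fin N,
      0 ≤ ρ⁻¹ * (h n * Real.log (h n) - hhat n * Real.log (hhat n)
        - (Real.log (hhat n) + 1) * (h n - hhat n)) + 1 / 2 * (h n - hhat n) ^ 2 := by
    intro h hpos n
    have hE := entropy_tangent (hhat n) (h n) (hs_pos n) (hpos n)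
    have h1 : (0:ℝ) < ρ⁻¹ := by positivity
    nlinarith [sq_nonneg (h n - hhat n)]
  refine ⟨by rw [hΔ]; exact ⟨fun n => (hs_pos n).le, hsum_hat⟩, ?_, ?_⟩
  · intro h hh
    rw [hΔ] at hh
    obtain ⟨hpos, hsum⟩ := hh
    have := main h hpos hsum
    have hnn : 0 ≤ ∑ n, (ρ⁻¹ * (h n * Real.log (h n) - hhat n * Real.log (hhat n)
        - (Real.log (hhat n) + 1) * (h n - hhat n)) + 1 / 2 * (h n - hhat n) ^ 2) :=
      Finset.sum_nonneg fun n _ => term_nonneg h hpos n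
    linarith
  · intro h hh heq
    rw [hΔ] at hh
    obtain ⟨hpos, hsum⟩ := hh
    have hm := main h hpos hsum
    rw [heq] at hm
    have hzero : ∀ n ∈ Finset.univ, (ρ⁻¹ * (h n * Real.log (h n) - hhat n * Real.log (hhat n)
        - (Real.log (hhat n) + 1) * (h n - hhat n)) + 1 / 2 * (h n - hhat n) ^ 2) = 0 :=
      (Finset.sum_eq_zero_iff_of_nonneg fun n _ => term_nonneg h hpos n).mp (by linarith)
    funext n
    have h1 := hzero n (Finset.mem_univ n)
    have hE := entropy_tangent (hhat n) (h n) (hs_pos n) (hpos n)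
    have h2 : (0:ℝ) < ρ⁻¹ := by positivity
    nlinarith [sq_nonneg (h n - hhat n)]
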